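/- arXiv:1802.07510 — 3 statements merged into one kernel-verified Lean document; each statement's English description precedes it below -/
import Mathlib

section
/- Let L be the combinatorial Laplacian of a weighted graph G on N vertices, C ∈ ℝ^{n×N} a coarsening matrix with Π = Cᵀ C, and L̃ = C L Cᵀ. Then for every k with 1 ≤ k ≤ n, the k-th smallest eigenvalue of L̃ satisfies the variational characterization λ̃_k = min over all k-dimensional linear subspaces U of ℝ^N contained in the range of Π of max_{x ∈ U, x ≠ 0} (xᵀ L x)/(xᵀ x). -/
open Matrix

/-- The combinatorial Laplacian `L = D - W`. -/
def lap {N : ℕ} (W : Matrix (Fin N) (Fin N) ℝ) : Matrix (Fin N) (Fin N) ℝ :=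
  Matrix.diagonal (fun i => ∑ j, W i j) - W

/-- `W` is the weight matrix of a weighted graph: symmetric, nonnegative, zero diagonal. -/
def IsWeightedGraph {N : ℕ} (W : Matrix (Fin N) (Fin N) ℝ) : Prop :=
  (∀ i j, W i j = W j i) ∧ (∀ i j, 0 ≤ W i j) ∧ (∀ i, W i i = 0)

/-- A coarsening matrix `C : ℝ^{n×N}`. -/
def IsCoarsening {n N : ℕ} (C : Matrix (Fin n) (Fin N) ℝ) : Prop :=
  ∃ φ : Fin N → Fin n, Function.Surjective φ ∧
    ∀ i j, C i j =
      if φ j = i then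
        (Real.sqrt ((Finset.univ.filter (fun j' : Fin N => φ j' = i)).card : ℝ))⁻¹
      else 0

/-!
Since `C * Cᵀ = 1`, the map `v ↦ Cᵀ v` is an isometry of `ℝⁿ` onto the range of `Π = Cᵀ C`
which carries the Rayleigh quotient of `L̃ = C L Cᵀ` to that of `L`. Hence the `(k+1)`-dimensional
subspaces of `range Π` are exactly the images of the `(k+1)`-dimensional subspaces of `ℝⁿ`, and
the claim is the Courant–Fischer theorem for `L̃`. In the orthonormal eigenbasis of `L̃` the
Rayleigh quotient is a weighted mean of the eigenvalues: on the span of the first `k+1`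
eigenvectors it is at most `λ̃ₖ`, with equality at the `k`-th one, and every `(k+1)`-dimensional
subspace meets the span of the last `n-k` eigenvectors, where it is at least `λ̃ₖ`.
-/

open Module

theorem Submodule.exists_mem_ne_zero_of_finrank_lt_add {K V : Type*} [DivisionRing K]
    [AddCommGroup V] [Module K V] [FiniteDimensional K V] {s t : Submodule K V}
    (h : finrank K V < finrank K s + finrank K t) : ∃ v ∈ s, v ∈ t ∧ v ≠ 0 := by
  by_contra! hst
  exact h.not_ge (Submodule.finrank_add_finrank_le_of_disjoint
    (Submodule.disjoint_def.2 hst))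

namespace Matrix

theorem dotProduct_self_pos {ι : Type*} [Fintype ι] {v : ι → ℝ} (hv : v ≠ 0) : 0 < v ⬝ᵥ v := by
  simpa using dotProduct_self_star_pos_iff.2 hv

noncomputable def rayleigh {ι : Type*} [Fintype ι] (A : Matrix ι ι ℝ) (v : ι → ℝ) : ℝ :=
  (v ⬝ᵥ (A *ᵥ v)) / (v ⬝ᵥ v)

def rayleighQuotients {ι : Type*} [Fintype ι] (A : Matrix ι ι ℝ) (U : Submodule ℝ (ι → ℝ)) :
    Set ℝ :=
  {q | ∃ y, y ∈ U ∧ y ≠ 0 ∧ q = rayleigh A y}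

section OrthonormalRows

variable {ι : Type*} [Fintype ι] [DecidableEq ι] {x : ι → ι → ℝ}

theorem eq_sum_dotProduct_smul_of_orthonormal
    (horth : ∀ i j, x i ⬝ᵥ x j = if i = j then (1 : ℝ) else 0) (v : ι → ℝ) :
    v = ∑ i, (x i ⬝ᵥ v) • x i := by
  have hXXt : of x * (of x)ᵀ = 1 := by
    ext i j
    simpa [mul_apply, one_apply, dotProduct] using horth i j
  calc v = (of x)ᵀ *ᵥ (of x *ᵥ v) := by rw [mulVec_mulVec, mul_eq_one_comm.mp hXXt, one_mulVec]
    _ = ∑ i, (x i ⬝ᵥ v) • x i := by rw [mulVec_transpose, vecMul_eq_sum]; rfl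

theorem dotProduct_self_eq_sum_sq_of_orthonormal
    (horth : ∀ i j, x i ⬝ᵥ x j = if i = j then (1 : ℝ) else 0) (v : ι → ℝ) :
    v ⬝ᵥ v = ∑ i, (x i ⬝ᵥ v) ^ 2 := by
  conv_lhs => arg 2; rw [eq_sum_dotProduct_smul_of_orthonormal horth v]
  rw [dotProduct_sum]
  simp only [dotProduct_comm v, smul_dotProduct, smul_eq_mul, sq]

theorem dotProduct_mulVec_eq_sum_of_orthonormal {A : Matrix ι ι ℝ} {lam : ι → ℝ}
    (horth : ∀ i j, x i ⬝ᵥ x j = if i = j then (1 : ℝ) else 0)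
    (heig : ∀ i, A *ᵥ x i = lam i • x i) (v : ι → ℝ) :
    v ⬝ᵥ (A *ᵥ v) = ∑ i, lam i * (x i ⬝ᵥ v) ^ 2 := by
  conv_lhs => arg 2; rw [eq_sum_dotProduct_smul_of_orthonormal horth v]
  rw [mulVec_sum, dotProduct_sum]
  simp only [mulVec_smul, heig, dotProduct_comm v, smul_dotProduct, smul_eq_mul]
  exact Finset.sum_congr rfl fun i _ => by ring

theorem linearIndependent_of_orthonormal
    (horth : ∀ i j, x i ⬝ᵥ x j = if i = j then (1 : ℝ) else 0) :
    LinearIndependent ℝ x := by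
  rw [Fintype.linearIndependent_iff]
  intro g hg i
  simpa [dotProduct_sum, horth] using congrArg (x i ⬝ᵥ ·) hg

theorem dotProduct_eq_zero_of_mem_span_image
    (horth : ∀ i j, x i ⬝ᵥ x j = if i = j then (1 : ℝ) else 0) {s : Set ι} {v : ι → ℝ}
    (hv : v ∈ Submodule.span ℝ (x '' s)) {j : ι} (hj : j ∉ s) : x j ⬝ᵥ v = 0 := by
  induction hv using Submodule.span_induction with
  | mem _ hy =>
    obtain ⟨i, hi, rfl⟩ := hy
    rw [horth, if_neg (ne_of_mem_of_not_mem hi hj).symm]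
  | zero => exact dotProduct_zero _
  | add _ _ _ _ h₁ h₂ => rw [dotProduct_add, h₁, h₂, add_zero]
  | smul _ _ _ h => rw [dotProduct_smul, h, smul_zero]

theorem finrank_span_image_of_orthonormal
    (horth : ∀ i j, x i ⬝ᵥ x j = if i = j then (1 : ℝ) else 0) (s : Finset ι) :
    finrank ℝ (Submodule.span ℝ (x '' s)) = s.card := by
  rw [Set.image_eq_range, finrank_span_eq_card (b := fun i : (s : Set ι) => x i)
    ((linearIndependent_of_orthonormal horth).comp _ Subtype.val_injective)]
  simp

variable {A : Matrix ι ι ℝ} {lam : ι → ℝ}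
  (horth : ∀ i j, x i ⬝ᵥ x j = if i = j then (1 : ℝ) else 0)
  (heig : ∀ i, A *ᵥ x i = lam i • x i)
include horth heig

theorem rayleigh_le_of_forall_eigenvalue_le {v : ι → ℝ} (hv : v ≠ 0) {M : ℝ}
    (hM : ∀ i, x i ⬝ᵥ v ≠ 0 → lam i ≤ M) : rayleigh A v ≤ M := by
  rw [rayleigh, div_le_iff₀ (dotProduct_self_pos hv),
    dotProduct_mulVec_eq_sum_of_orthonormal horth heig,
    dotProduct_self_eq_sum_sq_of_orthonormal horth, Finset.mul_sum]
  refine Finset.sum_le_sum fun i _ => ?_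
  by_cases hi : x i ⬝ᵥ v = 0
  · simp [hi]
  · exact mul_le_mul_of_nonneg_right (hM i hi) (sq_nonneg _)

theorem le_rayleigh_of_forall_le_eigenvalue {v : ι → ℝ} (hv : v ≠ 0) {M : ℝ}
    (hM : ∀ i, x i ⬝ᵥ v ≠ 0 → M ≤ lam i) : M ≤ rayleigh A v := by
  rw [rayleigh, le_div_iff₀ (dotProduct_self_pos hv),
    dotProduct_mulVec_eq_sum_of_orthonormal horth heig,
    dotProduct_self_eq_sum_sq_of_orthonormal horth, Finset.mul_sum]
  refine Finset.sum_le_sum fun i _ => ?_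
  by_cases hi : x i ⬝ᵥ v = 0
  · simp [hi]
  · exact mul_le_mul_of_nonneg_right (hM i hi) (sq_nonneg _)

theorem bddAbove_rayleighQuotients (U : Submodule ℝ (ι → ℝ)) :
    BddAbove (rayleighQuotients A U) := by
  refine ⟨∑ i, |lam i|, ?_⟩
  rintro _ ⟨v, -, hv, rfl⟩
  exact rayleigh_le_of_forall_eigenvalue_le horth heig hv fun i _ => (le_abs_self _).trans
    (Finset.single_le_sum (fun j _ => abs_nonneg (lam j)) (Finset.mem_univ i))

end OrthonormalRows

section SortedEigenvalues

variable {n : ℕ} {A : Matrix (Fin n) (Fin n) ℝ} {lam : Fin n → ℝ} {x : Fin n → Fin n → ℝ}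
  (hmono : Monotone lam) (horth : ∀ i j, x i ⬝ᵥ x j = if i = j then (1 : ℝ) else 0)
  (heig : ∀ i, A *ᵥ x i = lam i • x i)
include hmono horth heig

theorem isGreatest_rayleighQuotients_span_Iic (k : Fin n) :
    IsGreatest (rayleighQuotients A (Submodule.span ℝ (x '' ↑(Finset.Iic k)))) (lam k) := by
  refine ⟨⟨x k, Submodule.subset_span ⟨k, by simp, rfl⟩, ?_, ?_⟩, ?_⟩
  · exact fun h => by simpa [h] using horth k k
  · rw [rayleigh, heig, dotProduct_smul, horth, if_pos rfl, smul_eq_mul, mul_one, div_one]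
  · rintro _ ⟨v, hv, hv0, rfl⟩
    refine rayleigh_le_of_forall_eigenvalue_le horth heig hv0 fun i hi => hmono ?_
    by_contra hik
    exact hi (dotProduct_eq_zero_of_mem_span_image horth hv (by simpa using hik))

theorem le_sSup_rayleighQuotients {V : Submodule ℝ (Fin n → ℝ)} {k : Fin n}
    (hV : finrank ℝ V = k + 1) : lam k ≤ sSup (rayleighQuotients A V) := by
  set T := Submodule.span ℝ (x '' ↑(Finset.Ici k))
  have hT : finrank ℝ T = n - k := by
    rw [finrank_span_image_of_orthonormal horth, Fin.card_Ici]
  obtain ⟨v, hvV, hvT, hv⟩ := Submodule.exists_mem_ne_zero_of_finrank_lt_add (s := V) (t := T)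
    (by rw [finrank_fin_fun, hV, hT]; omega)
  refine le_trans ?_ (le_csSup (bddAbove_rayleighQuotients horth heig V) ⟨v, hvV, hv, rfl⟩)
  refine le_rayleigh_of_forall_le_eigenvalue horth heig hv fun i hi => hmono ?_
  by_contra hik
  exact hi (dotProduct_eq_zero_of_mem_span_image horth hvT (by simpa using hik))

theorem isLeast_sSup_rayleighQuotients (k : Fin n) :
    IsLeast {r | ∃ V : Submodule ℝ (Fin n → ℝ), finrank ℝ V = k + 1 ∧
      r = sSup (rayleighQuotients A V)} (lam k) := by
  refine ⟨⟨_, ?_, (isGreatest_rayleighQuotients_span_Iic hmono horth heig k).csSup_eq.symm⟩, ?_⟩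
  · rw [finrank_span_image_of_orthonormal horth, Fin.card_Iic]
  · rintro _ ⟨V, hV, rfl⟩
    exact le_sSup_rayleighQuotients hmono horth heig hV

end SortedEigenvalues

section RowOrthonormal

variable {m p : Type*} [Fintype m] [Fintype p] [DecidableEq p] {C : Matrix p m ℝ}
  (hC : C * Cᵀ = 1)
include hC

theorem injective_toLin'_transpose : Function.Injective (toLin' Cᵀ) := by
  intro u v h
  simpa [mulVec_mulVec, hC] using congrArg (C *ᵥ ·) h

theorem range_toLin'_transpose_mul [DecidableEq m] :
    LinearMap.range (toLin' (Cᵀ * C)) = LinearMap.range (toLin' Cᵀ) := by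
  rw [toLin'_mul, LinearMap.range_comp_of_range_eq_top _ (LinearMap.range_eq_top.2 fun v =>
    ⟨Cᵀ *ᵥ v, by rw [toLin'_apply, mulVec_mulVec, hC, one_mulVec]⟩)]

theorem rayleigh_transpose_mulVec (L : Matrix m m ℝ) (v : p → ℝ) :
    rayleigh L (Cᵀ *ᵥ v) = rayleigh (C * L * Cᵀ) v := by
  have adjoint : ∀ w, (Cᵀ *ᵥ v) ⬝ᵥ w = v ⬝ᵥ (C *ᵥ w) := fun w => by
    rw [dotProduct_comm, dotProduct_transpose_mulVec]
  simp only [rayleigh, adjoint, mulVec_mulVec, hC, one_mulVec, Matrix.mul_assoc]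

theorem rayleighQuotients_map_toLin'_transpose (L : Matrix m m ℝ) (V : Submodule ℝ (p → ℝ)) :
    rayleighQuotients L (V.map (toLin' Cᵀ)) = rayleighQuotients (C * L * Cᵀ) V := by
  ext q
  constructor
  · rintro ⟨_, ⟨v, hv, rfl⟩, hv0, rfl⟩
    exact ⟨v, hv, fun h => hv0 (by rw [h, map_zero]), rayleigh_transpose_mulVec hC L v⟩
  · rintro ⟨v, hv, hv0, rfl⟩
    exact ⟨_, ⟨v, hv, rfl⟩, (map_ne_zero_iff _ (injective_toLin'_transpose hC)).2 hv0,
      (rayleigh_transpose_mulVec hC L v).symm⟩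

theorem setOf_sSup_rayleighQuotients_le_range_eq [DecidableEq m] (L : Matrix m m ℝ) (d : ℕ) :
    {r | ∃ U : Submodule ℝ (m → ℝ), finrank ℝ U = d ∧
      U ≤ LinearMap.range (toLin' (Cᵀ * C)) ∧ r = sSup (rayleighQuotients L U)} =
    {r | ∃ V : Submodule ℝ (p → ℝ), finrank ℝ V = d ∧
      r = sSup (rayleighQuotients (C * L * Cᵀ) V)} := by
  have finrank_map (V : Submodule ℝ (p → ℝ)) : finrank ℝ (V.map (toLin' Cᵀ)) = finrank ℝ V :=
    (Submodule.equivMapOfInjective _ (injective_toLin'_transpose hC) V).finrank_eq.symm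
  ext r
  constructor
  · rintro ⟨U, hU, hUC, rfl⟩
    rw [range_toLin'_transpose_mul hC] at hUC
    rw [← Submodule.map_comap_eq_self hUC] at hU ⊢
    exact ⟨_, (finrank_map _).symm.trans hU, by rw [rayleighQuotients_map_toLin'_transpose hC]⟩
  · rintro ⟨V, hV, rfl⟩
    refine ⟨V.map (toLin' Cᵀ), (finrank_map V).trans hV, ?_, by
      rw [rayleighQuotients_map_toLin'_transpose hC]⟩
    rw [range_toLin'_transpose_mul hC]
    exact LinearMap.map_le_range

end RowOrthonormal
end Matrix

theorem IsCoarsening.mul_transpose_eq_one {n N : ℕ} {C : Matrix (Fin n) (Fin N) ℝ}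
    (hC : IsCoarsening C) : C * Cᵀ = 1 := by
  obtain ⟨φ, hφ, hCφ⟩ := hC
  ext i i'
  simp only [mul_apply, transpose_apply, one_apply, hCφ, mul_ite, ite_mul, zero_mul, mul_zero,
    ← ite_and]
  split_ifs with h
  · subst h
    have hpos : (0 : ℝ) < (Finset.univ.filter (fun j => φ j = i)).card := by
      obtain ⟨j, rfl⟩ := hφ i
      exact_mod_cast Finset.card_pos.2 ⟨j, by simp⟩
    rw [Finset.sum_ite, Finset.sum_const_zero, add_zero, Finset.sum_const, nsmul_eq_mul]
    simp only [and_self]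
    rw [← mul_inv, Real.mul_self_sqrt hpos.le, mul_inv_cancel₀ hpos.ne']
  · exact Finset.sum_eq_zero fun j _ =>
      if_neg fun hj : φ j = i' ∧ φ j = i => h (hj.2.symm.trans hj.1)

theorem coarsened_laplacian_minmax_general {n N : ℕ}
    (W : Matrix (Fin N) (Fin N) ℝ)
    (C : Matrix (Fin n) (Fin N) ℝ) (hC : IsCoarsening C)
    (lamt : Fin n → ℝ) (xt : Fin n → Fin n → ℝ)
    (hmonot : Monotone lamt)
    (horthot : ∀ i j, xt i ⬝ᵥ xt j = if i = j then (1 : ℝ) else 0)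
    (heigt : ∀ i, (C * lap W * Cᵀ) *ᵥ xt i = lamt i • xt i)
    (k : Fin n) :
    IsLeast
      { r : ℝ | ∃ U : Submodule ℝ (Fin N → ℝ),
          Module.finrank ℝ U = (k : ℕ) + 1 ∧
          U ≤ LinearMap.range (Matrix.toLin' (Cᵀ * C)) ∧
          r = sSup { q : ℝ | ∃ y : Fin N → ℝ,
                y ∈ U ∧ y ≠ 0 ∧ q = (y ⬝ᵥ (lap W *ᵥ y)) / (y ⬝ᵥ y) } }
      (lamt k) := by
  have h := isLeast_sSup_rayleighQuotients hmonot horthot heigt k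
  rw [← setOf_sSup_rayleighQuotients_le_range_eq hC.mul_transpose_eq_one] at h
  exact h

/-- the Courant–Fischer type variational characterization of the `k`-th smallest
eigenvalue of the coarsened Laplacian `L̃ = C L Cᵀ`:
`λ̃_k` is the minimum, over all `k`-dimensional subspaces `U` of `ℝ^N` contained in the range of
`Π = CᵀC`, of the maximum Rayleigh quotient `(xᵀ L x)/(xᵀ x)` over nonzero `x ∈ U`.
(Here `k : Fin n` is the 0-based index, so the subspace dimension is `k + 1`.) -/
theorem coarsened_laplacian_minmax {n N : ℕ} (hn : n ≤ N)
    (W : Matrix (Fin N) (Fin N) ℝ) (hW : IsWeightedGraph W)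
    (C : Matrix (Fin n) (Fin N) ℝ) (hC : IsCoarsening C)
    (lamt : Fin n → ℝ) (xt : Fin n → Fin n → ℝ)
    (hmonot : Monotone lamt)
    (horthot : ∀ i j, xt i ⬝ᵥ xt j = if i = j then (1 : ℝ) else 0)
    (heigt : ∀ i, (C * lap W * Cᵀ) *ᵥ xt i = lamt i • xt i)
    (k : Fin n) :
    IsLeast
      { r : ℝ | ∃ U : Submodule ℝ (Fin N → ℝ),
          Module.finrank ℝ U = (k : ℕ) + 1 ∧
          U ≤ LinearMap.range (Matrix.toLin' (Cᵀ * C)) ∧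
          r = sSup { q : ℝ | ∃ y : Fin N → ℝ,
                y ∈ U ∧ y ≠ 0 ∧ q = (y ⬝ᵥ (lap W *ᵥ y)) / (y ⬝ᵥ y) } }
      (lamt k) :=
  coarsened_laplacian_minmax_general W C hC lamt xt hmonot horthot heigt k
end

section
/- Let G be a weighted graph on N vertices with combinatorial Laplacian L, E_F a contracted matching of G with associated averaging projection Π_F, and let x ∈ ℝ^N be a unit eigenvector of L with eigenvalue λ. If λ ≤ (d_i + d_j + 2 W(i,j))/4 for every edge {i,j} ∈ E_F, then xᵀ Π_F L Π_F x ≥ λ. -/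
open Matrix

/-- A contracted matching of the weighted graph given by `W`: a finite set of edges
(each recorded once, as an ordered pair `(i,j)` with `W i j > 0` and `i ≠ j`) such that for any
two distinct edges `{i,j}`, `{p,q}` all of `W i p`, `W i q`, `W j p`, `W j q` vanish
(in particular the edges are vertex-disjoint, and no vertex of one edge is adjacent to a vertex
of another one). -/
def IsContractedMatching {N : ℕ} (W : Matrix (Fin N) (Fin N) ℝ)
    (EF : Finset (Fin N × Fin N)) : Prop :=
  (∀ e ∈ EF, e.1 ≠ e.2 ∧ 0 < W e.1 e.2) ∧
  (∀ e ∈ EF, ∀ e' ∈ EF, e ≠ e' →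
    W e.1 e'.1 = 0 ∧ W e.1 e'.2 = 0 ∧ W e.2 e'.1 = 0 ∧ W e.2 e'.2 = 0)

open scoped Classical in
/-- The averaging projection `Π_F` associated with a (vertex-disjoint) set of edges `E_F`:
`(Π_F x)(i) = (Π_F x)(j) = (x(i)+x(j))/2` for every `{i,j} ∈ E_F`, and `(Π_F x)(ℓ) = x(ℓ)` for
every vertex `ℓ` not incident to an edge of `E_F`. -/
noncomputable def avgProj {N : ℕ} (EF : Finset (Fin N × Fin N)) :
    Matrix (Fin N) (Fin N) ℝ :=
  Matrix.of fun a b =>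
    if a = b then (if ∃ e ∈ EF, a = e.1 ∨ a = e.2 then (1 : ℝ) / 2 else 1)
    else if (a, b) ∈ EF ∨ (b, a) ∈ EF then 1 / 2 else 0

/-! Write `Π_F x = x - z` with `z = Π_F^⊥ x`. Since `L` is symmetric and `L x = λ x`,
`(x - z)ᵀ L (x - z) = λ - 2λ xᵀz + zᵀ L z`. The vector `z` lives on the matched vertices, with
`z(i) = -z(j) = (x(i) - x(j))/2 =: δ` on each edge `{i,j}`; as no two edges of a contracted matching
are adjacent, both `xᵀz = Σ 2δ²` and `zᵀ L z = Σ (d_i + d_j + 2 W(i,j)) δ²` split edge by edge, so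
the hypothesis on `λ` makes `zᵀ L z - 2λ xᵀz` a sum of nonnegative terms. -/

theorem Matrix.dotProduct_mulVec_sub_of_mulVec_eq_smul {n R : Type*} [Fintype n] [CommRing R]
    {L : Matrix n n R} (hL : L.IsSymm) {x : n → R} {lam : R} (heig : L *ᵥ x = lam • x)
    (z : n → R) :
    (x - z) ⬝ᵥ (L *ᵥ (x - z)) = lam * (x ⬝ᵥ x) - 2 * lam * (x ⬝ᵥ z) + z ⬝ᵥ (L *ᵥ z) := by
  have hxLz : x ⬝ᵥ (L *ᵥ z) = lam * (x ⬝ᵥ z) := by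
    rw [dotProduct_mulVec, ← mulVec_transpose, hL.eq, heig, smul_dotProduct, smul_eq_mul]
  rw [mulVec_sub, sub_dotProduct, dotProduct_sub, dotProduct_sub, hxLz, heig,
    dotProduct_smul, dotProduct_smul, smul_eq_mul, smul_eq_mul, dotProduct_comm z x]
  ring

theorem IsWeightedGraph.lap_isSymm {N : ℕ} {W : Matrix (Fin N) (Fin N) ℝ}
    (hW : IsWeightedGraph W) : (lap W).IsSymm :=
  (isSymm_diagonal _).sub (IsSymm.ext fun i j => hW.1 j i)

section AvgProj

variable {N : ℕ} {W : Matrix (Fin N) (Fin N) ℝ} {EF : Finset (Fin N × Fin N)}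

theorem avgProj_apply_of_not_incident {a : Fin N} (ha : ¬ ∃ e ∈ EF, a = e.1 ∨ a = e.2)
    (b : Fin N) : avgProj EF a b = (1 : Matrix (Fin N) (Fin N) ℝ) a b := by
  unfold avgProj
  rw [of_apply, one_apply]
  split_ifs <;> grind

theorem avgProj_mulVec_apply_of_not_incident (x : Fin N → ℝ) {a : Fin N}
    (ha : ¬ ∃ e ∈ EF, a = e.1 ∨ a = e.2) : (avgProj EF *ᵥ x) a = x a := by
  have hrow : (fun b => avgProj EF a b) = fun b => (1 : Matrix (Fin N) (Fin N) ℝ) a b :=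
    funext (avgProj_apply_of_not_incident ha)
  rw [mulVec, hrow, ← mulVec, one_mulVec]

theorem sub_avgProj_mulVec_apply_of_not_incident (x : Fin N → ℝ) {a : Fin N}
    (ha : ¬ ∃ e ∈ EF, a = e.1 ∨ a = e.2) : (x - avgProj EF *ᵥ x) a = 0 := by
  rw [Pi.sub_apply, avgProj_mulVec_apply_of_not_incident x ha, sub_self]

namespace IsContractedMatching

theorem eq_of_incident (hEF : IsContractedMatching W EF) {e e' : Fin N × Fin N}
    (he : e ∈ EF) (he' : e' ∈ EF) {a : Fin N} (ha : a = e.1 ∨ a = e.2)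
    (ha' : a = e'.1 ∨ a = e'.2) : e = e' := by
  by_contra hne
  have hpos := (hEF.1 e he).2
  have hpos' := (hEF.1 e' he').2
  obtain ⟨h11, h12, -, -⟩ := hEF.2 e he e' he' hne
  have h'11 := (hEF.2 e' he' e he (Ne.symm hne)).1
  rcases ha with rfl | rfl <;> rcases ha' with h | h <;>
    simp only [h] at hpos hpos' h11 h12 h'11 <;> linarith

theorem avgProj_apply_of_incident (hEF : IsContractedMatching W EF) {e : Fin N × Fin N}
    (he : e ∈ EF) {a : Fin N} (ha : a = e.1 ∨ a = e.2) (b : Fin N) :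
    avgProj EF a b = if b = e.1 ∨ b = e.2 then 1 / 2 else 0 := by
  unfold avgProj
  rw [of_apply]
  by_cases hab : a = b
  · subst hab
    rw [if_pos rfl, if_pos ⟨e, he, ha⟩, if_pos ha]
  have hiff : (a, b) ∈ EF ∨ (b, a) ∈ EF ↔ b = e.1 ∨ b = e.2 := by
    constructor
    · rintro (h | h)
      · obtain rfl := hEF.eq_of_incident h he (Or.inl rfl) ha
        exact Or.inr rfl
      · obtain rfl := hEF.eq_of_incident h he (Or.inr rfl) ha
        exact Or.inl rfl
    · rintro (rfl | rfl) <;> rcases ha with rfl | rfl <;> simp_all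
  rw [if_neg hab, if_congr hiff rfl rfl]

theorem avgProj_mulVec_apply_of_incident (hEF : IsContractedMatching W EF) (x : Fin N → ℝ)
    {e : Fin N × Fin N} (he : e ∈ EF) {a : Fin N} (ha : a = e.1 ∨ a = e.2) :
    (avgProj EF *ᵥ x) a = (x e.1 + x e.2) / 2 := by
  have hedge : Finset.univ.filter (fun b => b = e.1 ∨ b = e.2) = {e.1, e.2} := by
    ext; simp
  simp only [mulVec, dotProduct, hEF.avgProj_apply_of_incident he ha, ite_mul, zero_mul]
  rw [← Finset.sum_filter, hedge, Finset.sum_pair (hEF.1 e he).1]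
  ring

theorem sub_avgProj_mulVec_apply_fst (hEF : IsContractedMatching W EF) (x : Fin N → ℝ)
    {e : Fin N × Fin N} (he : e ∈ EF) :
    (x - avgProj EF *ᵥ x) e.1 = (x e.1 - x e.2) / 2 := by
  rw [Pi.sub_apply, hEF.avgProj_mulVec_apply_of_incident x he (Or.inl rfl)]
  ring

theorem sub_avgProj_mulVec_apply_snd (hEF : IsContractedMatching W EF) (x : Fin N → ℝ)
    {e : Fin N × Fin N} (he : e ∈ EF) :
    (x - avgProj EF *ᵥ x) e.2 = -(x - avgProj EF *ᵥ x) e.1 := by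
  rw [Pi.sub_apply, Pi.sub_apply, hEF.avgProj_mulVec_apply_of_incident x he (Or.inl rfl),
    hEF.avgProj_mulVec_apply_of_incident x he (Or.inr rfl)]
  ring

theorem sum_eq_sum_edges {M : Type*} [AddCommMonoid M] (hEF : IsContractedMatching W EF)
    (f : Fin N → M) (hf : ∀ a, (¬ ∃ e ∈ EF, a = e.1 ∨ a = e.2) → f a = 0) :
    ∑ a, f a = ∑ e ∈ EF, (f e.1 + f e.2) := by
  have hdisj : (EF : Set (Fin N × Fin N)).PairwiseDisjoint fun e => ({e.1, e.2} : Finset _) := by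
    intro e he e' he' hne
    rw [Function.onFun, Finset.disjoint_left]
    intro a ha ha'
    simp only [Finset.mem_insert, Finset.mem_singleton] at ha ha'
    exact hne (hEF.eq_of_incident he he' ha ha')
  rw [← Finset.sum_subset (Finset.subset_univ (EF.biUnion fun e => {e.1, e.2}))
    fun a _ ha => hf a (by simpa using ha), Finset.sum_biUnion hdisj]
  exact Finset.sum_congr rfl fun e he => Finset.sum_pair (hEF.1 e he).1

theorem mulVec_apply_of_incident (hEF : IsContractedMatching W EF) {e : Fin N × Fin N}
    (he : e ∈ EF) {a : Fin N} (ha : a = e.1 ∨ a = e.2) (z : Fin N → ℝ)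
    (hz : ∀ b, (¬ ∃ e ∈ EF, b = e.1 ∨ b = e.2) → z b = 0) :
    (W *ᵥ z) a = W a e.1 * z e.1 + W a e.2 * z e.2 := by
  rw [mulVec, dotProduct, hEF.sum_eq_sum_edges _ fun b hb => by rw [hz b hb, mul_zero]]
  refine Finset.sum_eq_single_of_mem e he fun e' he' hne => ?_
  obtain ⟨h11, h12, h21, h22⟩ := hEF.2 e he e' he' hne.symm
  rcases ha with rfl | rfl <;> simp [*]

theorem dotProduct_lap_mulVec (hW : IsWeightedGraph W) (hEF : IsContractedMatching W EF)
    (z : Fin N → ℝ) (hz : ∀ a, (¬ ∃ e ∈ EF, a = e.1 ∨ a = e.2) → z a = 0)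
    (hanti : ∀ e ∈ EF, z e.2 = -z e.1) :
    z ⬝ᵥ (lap W *ᵥ z) =
      ∑ e ∈ EF, ((∑ ℓ, W e.1 ℓ) + (∑ ℓ, W e.2 ℓ) + 2 * W e.1 e.2) * z e.1 ^ 2 := by
  rw [dotProduct, hEF.sum_eq_sum_edges _ fun a ha => by rw [hz a ha, zero_mul]]
  refine Finset.sum_congr rfl fun e he => ?_
  rw [lap, sub_mulVec, Pi.sub_apply, Pi.sub_apply, mulVec_diagonal, mulVec_diagonal,
    hEF.mulVec_apply_of_incident he (Or.inl rfl) z hz,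
    hEF.mulVec_apply_of_incident he (Or.inr rfl) z hz, hanti e he, hW.2.2, hW.2.2, hW.1 e.2 e.1]
  ring

theorem dotProduct_sub_avgProj_mulVec (hEF : IsContractedMatching W EF) (x : Fin N → ℝ) :
    x ⬝ᵥ (x - avgProj EF *ᵥ x) = 2 * ∑ e ∈ EF, ((x e.1 - x e.2) / 2) ^ 2 := by
  rw [dotProduct, hEF.sum_eq_sum_edges _ fun a ha => by
    rw [sub_avgProj_mulVec_apply_of_not_incident x ha, mul_zero], Finset.mul_sum]
  refine Finset.sum_congr rfl fun e he => ?_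
  rw [hEF.sub_avgProj_mulVec_apply_snd x he, hEF.sub_avgProj_mulVec_apply_fst x he]
  ring

end IsContractedMatching

end AvgProj

/-- for a contracted matching `E_F` with averaging projection `Π_F`, and a unit
eigenvector `x` of `L` with eigenvalue `λ`, if `λ ≤ (d_i + d_j + 2 W(i,j))/4` for every edge
`{i,j} ∈ E_F` then `xᵀ Π_F L Π_F x ≥ λ`. -/
theorem avgProj_laplacian_quadform_ge {N : ℕ} (W : Matrix (Fin N) (Fin N) ℝ)
    (hW : IsWeightedGraph W) (EF : Finset (Fin N × Fin N))
    (hEF : IsContractedMatching W EF) (x : Fin N → ℝ) (lam : ℝ)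
    (heig : lap W *ᵥ x = lam • x) (hunit : x ⬝ᵥ x = 1)
    (hlam : ∀ e ∈ EF, lam ≤ ((∑ ℓ, W e.1 ℓ) + (∑ ℓ, W e.2 ℓ) + 2 * W e.1 e.2) / 4) :
    lam ≤ (avgProj EF *ᵥ x) ⬝ᵥ (lap W *ᵥ (avgProj EF *ᵥ x)) := by
  set z := x - avgProj EF *ᵥ x with hz
  have hzLz : z ⬝ᵥ (lap W *ᵥ z) = ∑ e ∈ EF,
      ((∑ ℓ, W e.1 ℓ) + (∑ ℓ, W e.2 ℓ) + 2 * W e.1 e.2) * ((x e.1 - x e.2) / 2) ^ 2 := by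
    rw [hEF.dotProduct_lap_mulVec hW z (fun a ha => sub_avgProj_mulVec_apply_of_not_incident x ha)
      fun e he => hEF.sub_avgProj_mulVec_apply_snd x he]
    exact Finset.sum_congr rfl fun e he => by rw [hz, hEF.sub_avgProj_mulVec_apply_fst x he]
  have hgap : 4 * lam * ∑ e ∈ EF, ((x e.1 - x e.2) / 2) ^ 2 ≤ ∑ e ∈ EF,
      ((∑ ℓ, W e.1 ℓ) + (∑ ℓ, W e.2 ℓ) + 2 * W e.1 e.2) * ((x e.1 - x e.2) / 2) ^ 2 := by
    rw [Finset.mul_sum]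
    exact Finset.sum_le_sum fun e he =>
      mul_le_mul_of_nonneg_right (by linarith [hlam e he]) (sq_nonneg _)
  rw [show avgProj EF *ᵥ x = x - z by rw [hz, sub_sub_cancel],
    dotProduct_mulVec_sub_of_mulVec_eq_smul hW.lap_isSymm heig, hunit,
    hEF.dotProduct_sub_avgProj_mulVec, hzLz]
  linarith
end

section
/- Let G be a weighted graph on N vertices with combinatorial Laplacian L, let μ be a finitely supported probability distribution on the set of contracted matchings of G with edge-contraction probabilities q_{ij}, and let x ∈ ℝ^N be a unit eigenvector of L with eigenvalue λ. Then E_{E_F ∼ μ}[ xᵀ Π_F L Π_F x ] − λ = (1/4) Σ_{{i,j} ∈ E} q_{ij} (x(i) − x(j))² (d_i + d_j + 2 W(i,j) − 4λ), where the sum runs over the edges of G. -/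
open Matrix

open scoped Classical in
/-- Given a finitely supported distribution on contracted matchings, described by a finite
support `Ω` and a weight function `p`, the edge-contraction probability
`q_{ij} = μ({E_F : {i,j} ∈ E_F})` of the (unordered) edge `{i,j}`. -/
noncomputable def edgeProb {N : ℕ} (Ω : Finset (Finset (Fin N × Fin N)))
    (p : Finset (Fin N × Fin N) → ℝ) (i j : Fin N) : ℝ :=
  ∑ F ∈ Ω.filter (fun F => (i, j) ∈ F ∨ (j, i) ∈ F), p F

/-!
For a contracted matching `F`, `Π_F x = x - z` with `z = ∑_{(i,j) ∈ F} (x i - x j)/2 • (δ_i - δ_j)`.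
As `L` is symmetric, `L x = λ x` and `xᵀx = 1`, this gives `(Π_F x)ᵀ L Π_F x = λ - 2λ zᵀx + zᵀLz`.
The matching condition makes the vectors `δ_i - δ_j` of distinct edges `L`-orthogonal, and
`(δ_i - δ_j)ᵀ L (δ_i - δ_j) = d_i + d_j + 2 W(i,j)`, so `(Π_F x)ᵀ L Π_F x - λ` is a sum over the
edges of `F`. Averaging over `μ` and regrouping by unordered edges produces the weights `q_{ij}`.
-/

open Finset

theorem Finset.sum_eq_sum_ite_mem_or_swap_mem {α M : Type*} [DecidableEq α] [AddCommMonoid M]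
    {F S : Finset (α × α)} (hS : ∀ e ∈ S, e.swap ∉ S) (hFS : ∀ e ∈ F, e ∈ S ∨ e.swap ∈ S)
    (hF : ∀ e ∈ F, e.swap ∉ F) {g : α × α → M} (hg : ∀ e, g e.swap = g e) :
    ∑ e ∈ F, g e = ∑ e ∈ S, if e ∈ F ∨ e.swap ∈ F then g e else 0 := by
  rw [← sum_filter]
  refine sum_nbij' (fun e => if e ∈ S then e else e.swap) (fun e => if e ∈ F then e else e.swap)
    ?_ ?_ ?_ ?_ ?_
  all_goals
    intro e _
    have := hS e; have := hS e.swap; have := hFS e; have := hF e; have := hF e.swap; have := hg e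
    by_cases e ∈ F <;> by_cases e ∈ S <;> simp_all

lemma Matrix.sum_dotProduct_mulVec_sum_of_orthogonal {ι n R : Type*} [Fintype n]
    [NonUnitalNonAssocSemiring R] (s : Finset ι) (M : Matrix n n R) (v : ι → n → R)
    (h : ∀ a ∈ s, ∀ b ∈ s, a ≠ b → v a ⬝ᵥ (M *ᵥ v b) = 0) :
    (∑ a ∈ s, v a) ⬝ᵥ (M *ᵥ ∑ a ∈ s, v a) = ∑ a ∈ s, v a ⬝ᵥ (M *ᵥ v a) := by
  rw [sum_dotProduct]
  refine sum_congr rfl fun a ha => ?_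
  rw [mulVec_sum, dotProduct_sum,
    sum_eq_single a (fun b hb hba => h a ha b hb hba.symm) (fun h' => absurd ha h')]

lemma Matrix.IsSymm.sub_dotProduct_mulVec_sub_of_mulVec_eq_smul {n R : Type*} [Fintype n]
    [CommRing R] {M : Matrix n n R} (hM : M.IsSymm) {x : n → R} {lam : R}
    (heig : M *ᵥ x = lam • x) (hunit : x ⬝ᵥ x = 1) (z : n → R) :
    (x - z) ⬝ᵥ (M *ᵥ (x - z)) - lam = z ⬝ᵥ (M *ᵥ z) - 2 * lam * (z ⬝ᵥ x) := by
  have hxz : x ⬝ᵥ (M *ᵥ z) = lam * (z ⬝ᵥ x) := by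
    rw [← dotProduct_transpose_mulVec, hM.eq, heig, dotProduct_smul, smul_eq_mul]
  rw [mulVec_sub, dotProduct_sub, sub_dotProduct, sub_dotProduct, hxz, heig, dotProduct_smul,
    dotProduct_smul, hunit, smul_eq_mul, smul_eq_mul]
  ring

section DiffVec

variable {n R : Type*} [Fintype n] [DecidableEq n] [CommRing R]

def diffVec (i j : n) : n → R := Pi.single i 1 - Pi.single j 1

lemma diffVec_dotProduct (i j : n) (v : n → R) : diffVec i j ⬝ᵥ v = v i - v j := by
  simp [diffVec, sub_dotProduct]

lemma diffVec_dotProduct_mulVec_diffVec (M : Matrix n n R) (i j k l : n) :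
    diffVec i j ⬝ᵥ (M *ᵥ diffVec k l) = M i k - M i l - M j k + M j l := by
  rw [diffVec_dotProduct]
  simp only [diffVec, mulVec_sub, mulVec_single_one, Pi.sub_apply, col_apply]
  ring

end DiffVec

section Graph

variable {N : ℕ} {W : Matrix (Fin N) (Fin N) ℝ} {F : Finset (Fin N × Fin N)}

lemma IsWeightedGraph.isSymm (hW : IsWeightedGraph W) : W.IsSymm :=
  IsSymm.ext fun i j => hW.1 j i

lemma lap_isSymm (hW : W.IsSymm) : (lap W).IsSymm := by
  rw [lap, IsSymm, transpose_sub, diagonal_transpose, hW.eq]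

lemma diffVec_dotProduct_lap_mulVec_diffVec_self (hW : W.IsSymm) (hdiag : ∀ i, W i i = 0)
    {i j : Fin N} (hij : i ≠ j) :
    diffVec i j ⬝ᵥ (lap W *ᵥ diffVec i j) = (∑ ℓ, W i ℓ) + (∑ ℓ, W j ℓ) + 2 * W i j := by
  rw [diffVec_dotProduct_mulVec_diffVec]
  simp only [lap, Matrix.sub_apply, diagonal_apply_eq, diagonal_apply_ne _ hij,
    diagonal_apply_ne _ hij.symm, hdiag, hW.apply i j]
  ring

namespace IsContractedMatching

lemma eq_of_mem_of_mem (hF : IsContractedMatching W F) {e e' : Fin N × Fin N} (he : e ∈ F)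
    (he' : e' ∈ F) {a : Fin N} (ha : a = e.1 ∨ a = e.2) (ha' : a = e'.1 ∨ a = e'.2) : e = e' := by
  by_contra hne
  have h := hF.2 e he e' he' hne
  have h' := hF.2 e' he' e he (Ne.symm hne)
  have hpos := (hF.1 e' he').2
  rcases ha with rfl | rfl <;> rcases ha' with h'' | h'' <;> simp_all

lemma swap_notMem (hF : IsContractedMatching W F) {e : Fin N × Fin N} (he : e ∈ F) :
    e.swap ∉ F := fun hswap =>
  (hF.1 e he).1 (congrArg Prod.fst (hF.eq_of_mem_of_mem he hswap (Or.inl rfl) (Or.inr rfl)))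

lemma diffVec_dotProduct_lap_mulVec_diffVec (hF : IsContractedMatching W F)
    {e e' : Fin N × Fin N} (he : e ∈ F) (he' : e' ∈ F) (hne : e ≠ e') :
    diffVec e.1 e.2 ⬝ᵥ (lap W *ᵥ diffVec e'.1 e'.2) = 0 := by
  obtain ⟨h11, h12, h21, h22⟩ := hF.2 e he e' he' hne
  have hdisj : ∀ a, a = e.1 ∨ a = e.2 → a ≠ e'.1 ∧ a ≠ e'.2 := fun a ha =>
    ⟨fun h => hne (hF.eq_of_mem_of_mem he he' ha (Or.inl h)),
      fun h => hne (hF.eq_of_mem_of_mem he he' ha (Or.inr h))⟩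
  obtain ⟨d11, d12⟩ := hdisj e.1 (Or.inl rfl)
  obtain ⟨d21, d22⟩ := hdisj e.2 (Or.inr rfl)
  rw [diffVec_dotProduct_mulVec_diffVec]
  simp [lap, d11, d12, d21, d22, h11, h12, h21, h22]

lemma sum_smul_diffVec_dotProduct_lap_mulVec (hF : IsContractedMatching W F) (hW : W.IsSymm)
    (hdiag : ∀ i, W i i = 0) (c : Fin N × Fin N → ℝ) :
    (∑ e ∈ F, c e • diffVec e.1 e.2) ⬝ᵥ (lap W *ᵥ ∑ e ∈ F, c e • diffVec e.1 e.2) =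
      ∑ e ∈ F, c e ^ 2 * ((∑ ℓ, W e.1 ℓ) + (∑ ℓ, W e.2 ℓ) + 2 * W e.1 e.2) := by
  rw [sum_dotProduct_mulVec_sum_of_orthogonal F (lap W)]
  · refine sum_congr rfl fun e he => ?_
    rw [mulVec_smul, dotProduct_smul, smul_dotProduct,
      diffVec_dotProduct_lap_mulVec_diffVec_self hW hdiag (hF.1 e he).1, smul_eq_mul, smul_eq_mul]
    ring
  · intro e he e' he' hne
    rw [mulVec_smul, dotProduct_smul, smul_dotProduct,
      hF.diffVec_dotProduct_lap_mulVec_diffVec he he' hne, smul_zero, smul_zero]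

lemma sum_eq_sum_edges_ite (hW : W.IsSymm) (hF : IsContractedMatching W F) {M : Type*}
    [AddCommMonoid M] {g : Fin N × Fin N → M} (hg : ∀ e, g e.swap = g e) :
    ∑ e ∈ F, g e = ∑ e ∈ univ.filter (fun e : Fin N × Fin N => e.1 < e.2 ∧ 0 < W e.1 e.2),
      if e ∈ F ∨ e.swap ∈ F then g e else 0 := by
  refine sum_eq_sum_ite_mem_or_swap_mem ?_ ?_ (fun e he => hF.swap_notMem he) hg
  · intro e he
    simp only [mem_filter, mem_univ, true_and, Prod.fst_swap, Prod.snd_swap] at he ⊢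
    exact fun h => lt_asymm he.1 h.1
  · intro e he
    obtain ⟨hne, hpos⟩ := hF.1 e he
    simp only [mem_filter, mem_univ, true_and, Prod.fst_swap, Prod.snd_swap, hW.apply e.1 e.2]
    rcases hne.lt_or_gt with h | h
    · exact Or.inl ⟨h, hpos⟩
    · exact Or.inr ⟨h, hpos⟩

end IsContractedMatching

end Graph

section AvgProj

variable {N : ℕ} {W : Matrix (Fin N) (Fin N) ℝ} {F : Finset (Fin N × Fin N)}

lemma avgProj_apply_of_mem (hF : IsContractedMatching W F) {e : Fin N × Fin N} (he : e ∈ F)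
    {a : Fin N} (ha : a = e.1 ∨ a = e.2) (b : Fin N) :
    avgProj F a b = if b = e.1 ∨ b = e.2 then 1 / 2 else 0 := by
  by_cases hab : a = b
  · subst hab
    rw [avgProj, of_apply, if_pos rfl, if_pos ⟨e, he, ha⟩, if_pos ha]
  · have hedge : (a, b) ∈ F ∨ (b, a) ∈ F ↔ b = e.1 ∨ b = e.2 := by
      constructor
      · rintro (h | h)
        · exact Or.inr (congrArg Prod.snd (hF.eq_of_mem_of_mem h he (Or.inl rfl) ha))
        · exact Or.inl (congrArg Prod.fst (hF.eq_of_mem_of_mem h he (Or.inr rfl) ha))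
      · intro hb
        obtain ⟨i, j⟩ := e
        rcases ha with rfl | rfl <;> rcases hb with rfl | rfl <;> simp_all
    rw [avgProj, of_apply, if_neg hab]
    exact if_congr hedge rfl rfl

lemma avgProj_apply_of_not_covered {a : Fin N} (ha : ¬∃ e ∈ F, a = e.1 ∨ a = e.2) (b : Fin N) :
    avgProj F a b = (1 : Matrix (Fin N) (Fin N) ℝ) a b := by
  by_cases hab : a = b
  · subst hab
    rw [avgProj, of_apply, if_pos rfl, if_neg ha, one_apply_eq]
  · have hedge : ¬((a, b) ∈ F ∨ (b, a) ∈ F) := by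
      rintro (h | h)
      · exact ha ⟨_, h, Or.inl rfl⟩
      · exact ha ⟨_, h, Or.inr rfl⟩
    rw [avgProj, of_apply, if_neg hab, if_neg hedge, one_apply_ne hab]

lemma avgProj_mulVec_apply_of_mem (hF : IsContractedMatching W F) {e : Fin N × Fin N}
    (he : e ∈ F) {a : Fin N} (ha : a = e.1 ∨ a = e.2) (x : Fin N → ℝ) :
    (avgProj F *ᵥ x) a = (x e.1 + x e.2) / 2 := by
  have hrow : (fun b => avgProj F a b) = (1 / 2 : ℝ) • (Pi.single e.1 1 + Pi.single e.2 1) := by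
    have hne := (hF.1 e he).1
    funext b
    rw [avgProj_apply_of_mem hF he ha]
    by_cases h1 : b = e.1 <;> by_cases h2 : b = e.2 <;> simp_all
  change (fun b => avgProj F a b) ⬝ᵥ x = _
  rw [hrow, smul_dotProduct, add_dotProduct, single_one_dotProduct, single_one_dotProduct,
    smul_eq_mul]
  ring

lemma avgProj_mulVec_apply_of_not_covered {a : Fin N} (ha : ¬∃ e ∈ F, a = e.1 ∨ a = e.2)
    (x : Fin N → ℝ) : (avgProj F *ᵥ x) a = x a := by
  calc (avgProj F *ᵥ x) a = ((1 : Matrix (Fin N) (Fin N) ℝ) *ᵥ x) a := by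
        simp only [mulVec, dotProduct, avgProj_apply_of_not_covered ha]
    _ = x a := by rw [one_mulVec]

lemma avgProj_mulVec (hF : IsContractedMatching W F) (x : Fin N → ℝ) :
    avgProj F *ᵥ x = x - ∑ e ∈ F, ((x e.1 - x e.2) / 2) • diffVec e.1 e.2 := by
  funext a
  rw [Pi.sub_apply, Finset.sum_apply]
  by_cases hcov : ∃ e ∈ F, a = e.1 ∨ a = e.2
  · obtain ⟨e, he, ha⟩ := hcov
    have hne := (hF.1 e he).1
    rw [avgProj_mulVec_apply_of_mem hF he ha, sum_eq_single e]
    · rcases ha with rfl | rfl <;>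
        simp only [diffVec, Pi.smul_apply, Pi.sub_apply, Pi.single_eq_same,
          Pi.single_eq_of_ne hne, Pi.single_eq_of_ne hne.symm, smul_eq_mul] <;> ring
    · intro e' he' hne'
      have h1 : a ≠ e'.1 := fun h => hne' (hF.eq_of_mem_of_mem he' he (Or.inl h) ha)
      have h2 : a ≠ e'.2 := fun h => hne' (hF.eq_of_mem_of_mem he' he (Or.inr h) ha)
      simp [diffVec, h1, h2]
    · exact fun h => absurd he h
  · rw [avgProj_mulVec_apply_of_not_covered hcov, sum_eq_zero, sub_zero]
    intro e he
    have h1 : a ≠ e.1 := fun h => hcov ⟨e, he, Or.inl h⟩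
    have h2 : a ≠ e.2 := fun h => hcov ⟨e, he, Or.inr h⟩
    simp [diffVec, h1, h2]

theorem avgProj_quadForm_sub_eigenvalue (hW : W.IsSymm) (hdiag : ∀ i, W i i = 0)
    (hF : IsContractedMatching W F) {x : Fin N → ℝ} {lam : ℝ} (heig : lap W *ᵥ x = lam • x)
    (hunit : x ⬝ᵥ x = 1) :
    (avgProj F *ᵥ x) ⬝ᵥ (lap W *ᵥ (avgProj F *ᵥ x)) - lam =
      1 / 4 * ∑ e ∈ F, (x e.1 - x e.2) ^ 2 *
        ((∑ ℓ, W e.1 ℓ) + (∑ ℓ, W e.2 ℓ) + 2 * W e.1 e.2 - 4 * lam) := by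
  rw [avgProj_mulVec hF, (lap_isSymm hW).sub_dotProduct_mulVec_sub_of_mulVec_eq_smul heig hunit,
    hF.sum_smul_diffVec_dotProduct_lap_mulVec hW hdiag, sum_dotProduct, mul_sum, mul_sum,
    ← sum_sub_distrib]
  refine sum_congr rfl fun e _ => ?_
  rw [smul_dotProduct, diffVec_dotProduct, smul_eq_mul]
  ring

end AvgProj

lemma sum_mul_sum_ite_eq_sum_edgeProb_mul {N : ℕ} (Ω : Finset (Finset (Fin N × Fin N)))
    (p : Finset (Fin N × Fin N) → ℝ) (S : Finset (Fin N × Fin N)) (g : Fin N × Fin N → ℝ) :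
    ∑ F ∈ Ω, p F * ∑ e ∈ S, (if e ∈ F ∨ e.swap ∈ F then g e else 0) =
      ∑ e ∈ S, edgeProb Ω p e.1 e.2 * g e := by
  simp only [edgeProb, sum_filter, sum_mul, mul_sum]
  rw [sum_comm]
  refine sum_congr rfl fun e _ => sum_congr rfl fun F _ => ?_
  simp only [Prod.mk.eta, Prod.swap]
  split_ifs <;> ring

theorem expected_avgProj_laplacian_quadform_general {N : ℕ} (W : Matrix (Fin N) (Fin N) ℝ)
    (hW : IsWeightedGraph W)
    (Ω : Finset (Finset (Fin N × Fin N))) (p : Finset (Fin N × Fin N) → ℝ)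
    (hmatch : ∀ F ∈ Ω, IsContractedMatching W F)
    (hsum : ∑ F ∈ Ω, p F = 1)
    (x : Fin N → ℝ) (lam : ℝ)
    (heig : lap W *ᵥ x = lam • x) (hunit : x ⬝ᵥ x = 1) :
    (∑ F ∈ Ω, p F * ((avgProj F *ᵥ x) ⬝ᵥ (lap W *ᵥ (avgProj F *ᵥ x)))) - lam =
      (1 / 4) * ∑ e ∈ Finset.univ.filter
          (fun e : Fin N × Fin N => e.1 < e.2 ∧ 0 < W e.1 e.2),
        edgeProb Ω p e.1 e.2 * (x e.1 - x e.2) ^ 2 *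
          ((∑ ℓ, W e.1 ℓ) + (∑ ℓ, W e.2 ℓ) + 2 * W e.1 e.2 - 4 * lam) := by
  set g : Fin N × Fin N → ℝ := fun e => (x e.1 - x e.2) ^ 2 *
    ((∑ ℓ, W e.1 ℓ) + (∑ ℓ, W e.2 ℓ) + 2 * W e.1 e.2 - 4 * lam) with hg
  have hg_swap : ∀ e, g e.swap = g e := fun e => by
    simp only [hg, Prod.fst_swap, Prod.snd_swap, hW.1 e.2 e.1]
    ring
  calc (∑ F ∈ Ω, p F * ((avgProj F *ᵥ x) ⬝ᵥ (lap W *ᵥ (avgProj F *ᵥ x)))) - lam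
      = ∑ F ∈ Ω, p F * ((avgProj F *ᵥ x) ⬝ᵥ (lap W *ᵥ (avgProj F *ᵥ x)) - lam) := by
        simp only [mul_sub, sum_sub_distrib, ← sum_mul, hsum, one_mul]
    _ = 1 / 4 * ∑ F ∈ Ω, p F * ∑ e ∈ univ.filter
          (fun e : Fin N × Fin N => e.1 < e.2 ∧ 0 < W e.1 e.2),
          (if e ∈ F ∨ e.swap ∈ F then g e else 0) := by
        rw [mul_sum]
        refine sum_congr rfl fun F hF => ?_
        rw [avgProj_quadForm_sub_eigenvalue hW.isSymm hW.2.2 (hmatch F hF) heig hunit,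
          (hmatch F hF).sum_eq_sum_edges_ite hW.isSymm hg_swap]
        ring
    _ = _ := by simp only [sum_mul_sum_ite_eq_sum_edgeProb_mul, hg, mul_assoc]

/-- for a finitely supported probability distribution `μ` (support `Ω`, weights
`p`) on contracted matchings of `G`, with edge-contraction probabilities `q_{ij}`, and a unit
eigenvector `x` of `L` with eigenvalue `λ`,
`E_{E_F∼μ}[xᵀ Π_F L Π_F x] − λ
  = (1/4) Σ_{{i,j} ∈ E} q_{ij} (x(i) − x(j))² (d_i + d_j + 2 W(i,j) − 4λ)`,
the sum running over the edges of `G` (each unordered edge represented once, as `(i,j)` with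
`i < j`). -/
theorem expected_avgProj_laplacian_quadform {N : ℕ} (W : Matrix (Fin N) (Fin N) ℝ)
    (hW : IsWeightedGraph W)
    (Ω : Finset (Finset (Fin N × Fin N))) (p : Finset (Fin N × Fin N) → ℝ)
    (hmatch : ∀ F ∈ Ω, IsContractedMatching W F)
    (hp : ∀ F ∈ Ω, 0 ≤ p F) (hsum : ∑ F ∈ Ω, p F = 1)
    (x : Fin N → ℝ) (lam : ℝ)
    (heig : lap W *ᵥ x = lam • x) (hunit : x ⬝ᵥ x = 1) :
    (∑ F ∈ Ω, p F * ((avgProj F *ᵥ x) ⬝ᵥ (lap W *ᵥ (avgProj F *ᵥ x)))) - lam =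
      (1 / 4) * ∑ e ∈ Finset.univ.filter
          (fun e : Fin N × Fin N => e.1 < e.2 ∧ 0 < W e.1 e.2),
        edgeProb Ω p e.1 e.2 * (x e.1 - x e.2) ^ 2 *
          ((∑ ℓ, W e.1 ℓ) + (∑ ℓ, W e.2 ℓ) + 2 * W e.1 e.2 - 4 * lam) :=
  expected_avgProj_laplacian_quadform_general W hW Ω p hmatch hsum x lam heig hunit
end
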